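/- arXiv:1512.04969 — 5 statements merged into one kernel-verified Lean document; each statement's English description precedes it below -/
import Mathlib

section
/- With the construction below, the ideal A_0 of finitely supported elements is contained in the subalgebra B, i.e., A_0 ⊆ B. -/
/-!
Write `corner φ` for the element with components `φ p • E₁₁`. Since `E₁₁ Pₙᵏ E₁₁ = [n ∣ k] E₁₁`,
the functions `φ` with `corner φ ∈ B` form a subspace closed under multiplication by
`g k = [n ∣ k] λ` (right multiplication by `σᵏ e`). Start from `g n₀ * λ`, which is supported on
the finitely many indices with `n ∣ n₀`. Multiplying by `g k - g k q` kills the index `q` and keeps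
`p₀` as soon as `g k` separates `q` from `p₀`: `g 0 = λ` does so when `n_q = n₀`, and `g n_q` does
so when `n_q` is a proper divisor of `n₀`. This isolates `E₁₁` in the component `p₀`; multiplying
by powers of `σ` on both sides gives every matrix unit there, and finite sums give all of `A₀`.
-/

open Matrix

/-- The `n×n` cyclic permutation matrix: identity block `I_{n-1}` in the upper right and
a `1` in the lower-left corner. -/
def cycMat (F : Type*) [Semiring F] (n : ℕ) : Matrix (Fin n) (Fin n) F :=
  Matrix.of fun k l => if (l : ℕ) = ((k : ℕ) + 1) % n then 1 else 0

/-- The matrix unit `E₁₁`, with `1` in the upper-left entry and zeros elsewhere. -/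
def e11 (F : Type*) [Semiring F] (n : ℕ) : Matrix (Fin n) (Fin n) F :=
  Matrix.of fun k l => if (k : ℕ) = 0 ∧ (l : ℕ) = 0 then 1 else 0

/-- Index set: pairs `(n, i)` with `n ≥ 2` and `1 ≤ i ≤ a n` (here `0`-indexed: `i < a n`).
Note that `n` lies in the support `S` of `a` automatically, since `i < a n` forces `a n ≠ 0`. -/
abbrev Idx (a : ℕ → ℕ) : Type := {p : ℕ × ℕ // 2 ≤ p.1 ∧ p.2 < a p.1}

/-- The ambient algebra `A = ∏_{n ∈ S} ∏_{i=1}^{a n} M_n(F)`. -/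
abbrev ConstrA (F : Type*) [Field F] (a : ℕ → ℕ) : Type _ :=
  ∀ p : Idx a, Matrix (Fin p.1.1) (Fin p.1.1) F

/-- The element `e` whose `(n,i)` component is `λ_{n,i} • E₁₁`. -/
def elemE {F : Type*} [Field F] (a : ℕ → ℕ) (lam : Idx a → F) : ConstrA F a :=
  fun p => lam p • e11 F p.1.1

/-- The element `σ` whose `(n,i)` component is the cyclic permutation matrix `P_n`. -/
def elemS (F : Type*) [Field F] (a : ℕ → ℕ) : ConstrA F a :=
  fun p => cycMat F p.1.1

theorem Equiv.Perm.permMatrix_mul_single_mul_permMatrix {n R : Type*} [Fintype n] [DecidableEq n]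
    [NonAssocSemiring R] (σ τ : Equiv.Perm n) (i j : n) (r : R) :
    σ.permMatrix R * single i j r * τ.permMatrix R = single (σ.symm i) (τ j) r := by
  rw [Equiv.Perm.permMatrix, Equiv.Perm.permMatrix, PEquiv.toMatrix_toPEquiv_mul,
    PEquiv.mul_toMatrix_toPEquiv, submatrix_submatrix]
  exact submatrix_single_equiv σ τ.symm i j r

theorem coe_finRotate_pow_apply {n : ℕ} (k : ℕ) (i : Fin n) :
    ((finRotate n ^ k) i : ℕ) = (i + k) % n := by
  induction k with
  | zero => simp [Nat.mod_eq_of_lt i.isLt]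
  | succ k ih =>
    have := i.neZero
    rw [pow_succ', Equiv.Perm.mul_apply, finRotate_apply, Fin.val_add, ih, Fin.val_one',
      Nat.add_mod_mod, Nat.mod_add_mod, add_assoc]

section Matrices

variable {F : Type*} [Semiring F] {n : ℕ}

theorem cycMat_eq_permMatrix : cycMat F n = (finRotate n).permMatrix F := by
  ext i j
  have h := coe_finRotate_pow_apply 1 i
  rw [pow_one] at h
  simp only [cycMat, of_apply, PEquiv.toMatrix_apply, Equiv.toPEquiv_apply, Option.mem_def,
    Option.some_inj, Fin.ext_iff, h, eq_comm]

theorem cycMat_pow (k : ℕ) : cycMat F n ^ k = (finRotate n ^ k).permMatrix F := by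
  induction k with
  | zero => simp
  | succ k ih => rw [pow_succ, ih, pow_succ', permMatrix_mul, cycMat_eq_permMatrix]

variable [NeZero n]

theorem e11_eq_single : e11 F n = single 0 0 1 := by
  ext i j
  simp only [e11, of_apply, single_apply, Fin.ext_iff, Fin.val_zero, eq_comm]

theorem single_eq_cycMat_pow_mul_e11_mul_cycMat_pow (i j : Fin n) :
    single i j (1 : F) = cycMat F n ^ (n - i) * e11 F n * cycMat F n ^ (j : ℕ) := by
  rw [cycMat_pow, cycMat_pow, e11_eq_single, Equiv.Perm.permMatrix_mul_single_mul_permMatrix]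
  congr 1
  · rw [eq_comm, Equiv.symm_apply_eq, Fin.ext_iff, coe_finRotate_pow_apply,
      Nat.add_sub_cancel' i.isLt.le, Nat.mod_self, Fin.val_zero]
  · rw [Fin.ext_iff, coe_finRotate_pow_apply, Fin.val_zero, zero_add, Nat.mod_eq_of_lt j.isLt]

theorem e11_mul_mul_e11 (M : Matrix (Fin n) (Fin n) F) :
    e11 F n * M * e11 F n = M 0 0 • e11 F n := by
  rw [e11_eq_single, single_mul_mul_single, smul_single]
  simp

theorem cycMat_pow_apply_zero_zero (k : ℕ) :
    (cycMat F n ^ k) 0 0 = if n ∣ k then 1 else 0 := by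
  simp [cycMat_pow, PEquiv.toMatrix_apply, Fin.ext_iff, coe_finRotate_pow_apply,
    Nat.dvd_iff_mod_eq_zero, eq_comm]

end Matrices

theorem Submodule.single_mem_of_separates {X K : Type*} [Field K] [DecidableEq X]
    (C : Submodule K (X → K)) (G : Set (X → K)) (hG : ∀ g ∈ G, ∀ φ ∈ C, g * φ ∈ C)
    {ψ : X → K} (hψ : ψ ∈ C) (hfin : (Function.support ψ).Finite) {x₀ : X} (hx₀ : ψ x₀ ≠ 0)
    (hsep : ∀ y, ψ y ≠ 0 → y ≠ x₀ → ∃ g ∈ G, g y ≠ g x₀) :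
    Pi.single x₀ 1 ∈ C := by
  suffices key : ∀ s : Finset X, ∀ φ ∈ C, φ x₀ ≠ 0 →
      (∀ y, φ y ≠ 0 → y ≠ x₀ → y ∈ s ∧ ∃ g ∈ G, g y ≠ g x₀) → Pi.single x₀ 1 ∈ C from
    key hfin.toFinset ψ hψ hx₀ fun y hy hne => ⟨hfin.mem_toFinset.2 hy, hsep y hy hne⟩
  intro s
  induction s using Finset.induction_on with
  | empty =>
    intro φ hφ hφx₀ hsupp
    convert C.smul_mem (φ x₀)⁻¹ hφ using 1
    funext y
    by_cases hy : y = x₀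
    · subst hy; simp [hφx₀]
    · have hφy : φ y = 0 := by_contra fun h => by simpa using (hsupp y h hy).1
      simp [hy, hφy]
  | insert y s hys ih =>
    intro φ hφ hφx₀ hsupp
    by_cases hy : φ y ≠ 0 ∧ y ≠ x₀
    · obtain ⟨g, hgG, hgy⟩ := (hsupp y hy.1 hy.2).2
      refine ih (g * φ - g y • φ) (C.sub_mem (hG g hgG φ hφ) (C.smul_mem _ hφ)) ?_ ?_
      · simpa [← sub_mul] using ⟨sub_ne_zero.2 hgy.symm, hφx₀⟩
      · intro z hz hzx₀
        have hz' : (g z - g y) * φ z ≠ 0 := by simpa [sub_mul] using hz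
        obtain ⟨hzy, hφz⟩ := mul_ne_zero_iff.1 hz'
        obtain ⟨hzs, hsepz⟩ := hsupp z hφz hzx₀
        exact ⟨(Finset.mem_insert.1 hzs).resolve_left (by rintro rfl; simp at hzy), hsepz⟩
    · refine ih φ hφ hφx₀ fun z hz hzx₀ => ?_
      obtain ⟨hzs, hsepz⟩ := hsupp z hz hzx₀
      refine ⟨(Finset.mem_insert.1 hzs).resolve_left ?_, hsepz⟩
      rintro rfl
      exact hy ⟨hz, hzx₀⟩

theorem mem_of_forall_single_mem_of_finite_support {ι : Type*} {M : ι → Type*} [DecidableEq ι]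
    [∀ i, AddCommMonoid (M i)] {S : Type*} [SetLike S (∀ i, M i)] [AddSubmonoidClass S (∀ i, M i)]
    {s : S} (hs : ∀ i m, Pi.single i m ∈ s)
    {x : ∀ i, M i} (hx : {i | x i ≠ 0}.Finite) : x ∈ s := by
  have hx_eq : x = ∑ i ∈ hx.toFinset, Pi.single i (x i) := by
    funext j
    rw [Finset.sum_apply, Finset.sum_pi_single]
    split_ifs with hj
    · rfl
    · simpa using hj
  rw [hx_eq]
  exact sum_mem fun i _ => hs i (x i)

namespace Idx

variable {a : ℕ → ℕ}

instance (p : Idx a) : NeZero p.1.1 := ⟨by have := p.2.1; omega⟩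

theorem finite_setOf_fst_le (N : ℕ) : {p : Idx a | p.1.1 ≤ N}.Finite := by
  have h : {q : ℕ × ℕ | q.1 ≤ N ∧ q.2 < a q.1}.Finite :=
    ((Set.finite_Iic N).biUnion fun n _ =>
      (Set.finite_singleton n).prod (Set.finite_Iio (a n))).subset fun q hq =>
        Set.mem_biUnion (x := q.1) hq.1 ⟨rfl, hq.2⟩
  exact (h.preimage Subtype.val_injective.injOn).subset fun p hp => ⟨hp, p.2.2⟩

end Idx

section Corner

variable {F : Type*} [Field F] {a : ℕ → ℕ}

def corner : (Idx a → F) →ₗ[F] ConstrA F a where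
  toFun φ p := φ p • e11 F p.1.1
  map_add' φ ψ := funext fun p => add_smul (φ p) (ψ p) _
  map_smul' c φ := funext fun p => mul_smul c (φ p) _

theorem corner_single (p : Idx a) :
    corner (Pi.single p (1 : F)) = Pi.single p (e11 F p.1.1) := by
  funext q
  by_cases hq : q = p
  · subst hq; simp [corner]
  · simp [corner, hq]

theorem corner_mul_elemS_pow_mul_corner (φ ψ : Idx a → F) (k : ℕ) :
    corner φ * elemS F a ^ k * corner ψ = corner fun p => if p.1.1 ∣ k then φ p * ψ p else 0 := by
  funext p
  simp only [corner, LinearMap.coe_mk, AddHom.coe_mk, Pi.mul_apply, Pi.pow_apply, elemS,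
    smul_mul_assoc, mul_smul_comm, smul_smul, e11_mul_mul_e11, cycMat_pow_apply_zero_zero]
  split_ifs <;> simp [mul_comm]

end Corner

section Adjoin

variable {F : Type*} [Field F] {a : ℕ → ℕ}

theorem single_mem_of_single_e11_mem {B : Subalgebra F (ConstrA F a)} (hS : elemS F a ∈ B)
    {p : Idx a} (he : Pi.single p (e11 F p.1.1) ∈ B)
    (M : Matrix (Fin p.1.1) (Fin p.1.1) F) : Pi.single p M ∈ B := by
  have hunit : ∀ i j, Pi.single p (single i j (1 : F)) ∈ B := by
    intro i j
    have h : Pi.single p (single i j (1 : F)) =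
        elemS F a ^ (p.1.1 - i) * Pi.single p (e11 F p.1.1) * elemS F a ^ (j : ℕ) := by
      rw [← Pi.single_mul_right, ← Pi.single_mul_left, single_eq_cycMat_pow_mul_e11_mul_cycMat_pow]
      rfl
    rw [h]
    exact mul_mem (mul_mem (pow_mem hS _) he) (pow_mem hS _)
  let S : Submodule F (Matrix (Fin p.1.1) (Fin p.1.1) F) :=
    B.toSubmodule.comap (LinearMap.single F (fun q : Idx a => Matrix (Fin q.1.1) (Fin q.1.1) F) p)
  change M ∈ S
  rw [matrix_eq_sum_single M]
  refine S.sum_mem fun i _ => S.sum_mem fun j _ => ?_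
  rw [← mul_one (M i j), ← smul_eq_mul, ← smul_single]
  exact S.smul_mem _ (hunit i j)

theorem single_e11_mem_adjoin (lam : Idx a → F) (hlam_ne : ∀ p, lam p ≠ 0)
    (hlam : ∀ p q : Idx a, p.1.1 = q.1.1 → p ≠ q → lam p ≠ lam q) (p₀ : Idx a) :
    Pi.single p₀ (e11 F p₀.1.1) ∈ Algebra.adjoin F {elemE a lam, elemS F a} := by
  set B := Algebra.adjoin F {elemE a lam, elemS F a}
  have hE : elemE a lam ∈ B := Algebra.subset_adjoin (Set.mem_insert _ _)
  have hS : elemS F a ∈ B := Algebra.subset_adjoin (Set.mem_insert_of_mem _ rfl)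
  let C : Submodule F (Idx a → F) := B.toSubmodule.comap corner
  let g (k : ℕ) (p : Idx a) : F := if p.1.1 ∣ k then lam p else 0
  have hg : ∀ k, ∀ φ ∈ C, g k * φ ∈ C := by
    intro k φ hφ
    have h : corner (g k * φ) = corner φ * elemS F a ^ k * elemE a lam := by
      rw [show elemE a lam = corner lam from rfl, corner_mul_elemS_pow_mul_corner]
      congr 1
      funext p
      simp only [Pi.mul_apply, g]
      split_ifs <;> ring
    change corner (g k * φ) ∈ B
    rw [h]
    exact mul_mem (mul_mem hφ (pow_mem hS k)) hE
  have hψ : g p₀.1.1 * lam ∈ C := hg _ lam hE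
  have hψ_supp : ∀ p, (g p₀.1.1 * lam) p ≠ 0 → p.1.1 ∣ p₀.1.1 := by
    intro p hp
    by_contra h
    simp [g, h] at hp
  have hψ_fin : (Function.support (g p₀.1.1 * lam)).Finite :=
    (Idx.finite_setOf_fst_le p₀.1.1).subset fun p hp =>
      Nat.le_of_dvd (NeZero.pos _) (hψ_supp p hp)
  have hsep : ∀ p, (g p₀.1.1 * lam) p ≠ 0 → p ≠ p₀ → ∃ h ∈ Set.range g, h p ≠ h p₀ := by
    intro p hp hne
    by_cases hn : p.1.1 = p₀.1.1
    · exact ⟨g 0, ⟨0, rfl⟩, by simpa [g] using hlam p p₀ hn hne⟩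
    · have hndvd : ¬ p₀.1.1 ∣ p.1.1 := fun h => hn (Nat.dvd_antisymm (hψ_supp p hp) h)
      exact ⟨g p.1.1, ⟨_, rfl⟩, by simpa [g, hndvd] using hlam_ne p⟩
  rw [← corner_single]
  exact C.single_mem_of_separates (Set.range g) (by rintro _ ⟨k, rfl⟩; exact hg k) hψ hψ_fin
    (by simpa [g] using hlam_ne p₀) hsep

end Adjoin

theorem stmt_1_general (F : Type*) [Field F] (a : ℕ → ℕ) (lam : Idx a → F)
    (hlam_ne : ∀ p, lam p ≠ 0)
    (hlam : ∀ p q : Idx a, p.1.1 = q.1.1 → p ≠ q → lam p ≠ lam q ∧ lam p ≠ -lam q)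
    (x : ConstrA F a) (hx : {p : Idx a | x p ≠ 0}.Finite) :
    x ∈ Algebra.adjoin F {elemE a lam, elemS F a} := by
  have hS : elemS F a ∈ Algebra.adjoin F {elemE a lam, elemS F a} :=
    Algebra.subset_adjoin (Set.mem_insert_of_mem _ rfl)
  have he := single_e11_mem_adjoin lam hlam_ne fun p q h hne => (hlam p q h hne).1
  exact mem_of_forall_single_mem_of_finite_support
    (fun p M => single_mem_of_single_e11_mem hS (he p) M) hx

/-- **Lemma (A₀ ⊆ B).** With `B = F⟨e,σ⟩ ⊆ A`, every finitely supported element of `A`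
lies in `B`; i.e. the ideal `A₀ = ⨁_{n ∈ S} A_n` of elements with only finitely many
nonzero components is contained in `B`. -/
theorem stmt_1 (F : Type*) [Field F] [IsAlgClosed F] (a : ℕ → ℕ) (lam : Idx a → F)
    (hlam_ne : ∀ p, lam p ≠ 0)
    (hlam : ∀ p q : Idx a, p.1.1 = q.1.1 → p ≠ q → lam p ≠ lam q ∧ lam p ≠ -lam q)
    (x : ConstrA F a) (hx : {p : Idx a | x p ≠ 0}.Finite) :
    x ∈ Algebra.adjoin F {elemE a lam, elemS F a} :=
  stmt_1_general F a lam hlam_ne hlam x hx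
end

section
/- Let F be an algebraically closed field and let R be a nontrivial finite-dimensional F-algebra that is prime (for all a, b ∈ R, if a·r·b = 0 for every r ∈ R then a = 0 or b = 0). Suppose R is generated as a unital F-algebra by two elements x and y satisfying x·y^i·x = 0 for all integers i ≥ 1. Then dim_F R = 1, i.e., R ≅ F. -/
/-- **Lemma.** A nontrivial finite-dimensional prime algebra `R` over an algebraically
closed field `F`, generated as a unital `F`-algebra by two elements `x, y` satisfying
`x·yⁱ·x = 0` for all `i ≥ 1`, is one-dimensional, i.e. `R ≅ F`. -/
theorem stmt_4 (F : Type*) [Field F] [IsAlgClosed F]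
    (R : Type*) [Ring R] [Nontrivial R] [Algebra F R] [FiniteDimensional F R]
    (hprime : ∀ a b : R, (∀ r : R, a * r * b = 0) → a = 0 ∨ b = 0)
    (x y : R) (hgen : Algebra.adjoin F ({x, y} : Set R) = ⊤)
    (hrel : ∀ i : ℕ, 1 ≤ i → x * y ^ i * x = 0) :
    Module.finrank F R = 1 := by
  classical
  -- Finishing lemma: if R is generated by a single element, we are done.
  have finish : ∀ z : R, Algebra.adjoin F ({z} : Set R) = ⊤ → Module.finrank F R = 1 := by
    intro z hz
    have hcomm : ∀ a b : R, a * b = b * a := by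
      intro a b
      have ha : a ∈ Algebra.adjoin F ({z} : Set R) := hz ▸ Algebra.mem_top
      have hb : b ∈ Algebra.adjoin F ({z} : Set R) := hz ▸ Algebra.mem_top
      rw [Algebra.adjoin_singleton_eq_range_aeval] at ha hb
      obtain ⟨p, hp⟩ := ha
      obtain ⟨q, hq⟩ := hb
      rw [← hp, ← hq, ← map_mul, ← map_mul, mul_comm]
    haveI : NoZeroDivisors R := by
      constructor
      intro a b hab
      refine hprime a b fun r => ?_
      rw [hcomm a r, mul_assoc, hab, mul_zero]
    haveI : IsDomain R := NoZeroDivisors.to_isDomain R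
    have hsurj : Function.Surjective (algebraMap F R) :=
      IsAlgClosed.algebraMap_bijective_of_isIntegral.2
    have hbij : Function.Bijective (Algebra.linearMap F R) :=
      ⟨(algebraMap F R).injective, hsurj⟩
    have e := LinearEquiv.ofBijective (Algebra.linearMap F R) hbij
    rw [← e.finrank_eq, Module.finrank_self]
  -- The spanning set of monomials
  set S : Set R := {r | ∃ a e c : ℕ, r = y ^ a * x ^ e * y ^ c} with hS
  set M : Submodule F R := Submodule.span F S with hM
  have hmemS : ∀ a e c : ℕ, y ^ a * x ^ e * y ^ c ∈ M := fun a e c =>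
    Submodule.subset_span ⟨a, e, c, rfl⟩
  -- every element of R lies in M
  have htop : ∀ r : R, r ∈ M := by
    -- first: products of monomials stay in M
    have key : ∀ a e c a' e' c' : ℕ,
        (y ^ a * x ^ e * y ^ c) * (y ^ a' * x ^ e' * y ^ c') ∈ M := by
      intro a e c a' e' c'
      obtain _ | e1 := e
      · have : (y ^ a * x ^ 0 * y ^ c) * (y ^ a' * x ^ e' * y ^ c')
            = y ^ (a + c + a') * x ^ e' * y ^ c' := by
          simp [pow_add, mul_assoc]
        rw [this]; exact hmemS _ _ _
      obtain _ | e1' := e'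
      · have : (y ^ a * x ^ (e1 + 1) * y ^ c) * (y ^ a' * x ^ 0 * y ^ c')
            = y ^ a * x ^ (e1 + 1) * y ^ (c + a' + c') := by
          simp [pow_add, mul_assoc]
        rw [this]; exact hmemS _ _ _
      rcases Nat.eq_zero_or_pos (c + a') with hca | hca
      · obtain ⟨hc, ha'⟩ := Nat.add_eq_zero.mp hca
        subst hc; subst ha'
        have : (y ^ a * x ^ (e1 + 1) * y ^ 0) * (y ^ 0 * x ^ (e1' + 1) * y ^ c')
            = y ^ a * x ^ (e1 + 1 + (e1' + 1)) * y ^ c' := by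
          simp [pow_add, mul_assoc]
        rw [this]; exact hmemS _ _ _
      · have h0 : x * y ^ (c + a') * x = 0 := hrel _ hca
        have : (y ^ a * x ^ (e1 + 1) * y ^ c) * (y ^ a' * x ^ (e1' + 1) * y ^ c')
            = y ^ a * x ^ e1 * (x * y ^ (c + a') * x) * (x ^ e1' * y ^ c') := by
          rw [pow_succ x e1, pow_succ' x e1', pow_add]
          simp [mul_assoc]
        rw [this, h0]
        simp
    have hclosure : (Submonoid.closure ({x, y} : Set R) : Set R) ⊆ M := by
      intro m hm
      induction hm using Submonoid.closure_induction with
      | mem u hu =>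
        rcases hu with h | h
        · subst h
          simpa using hmemS 0 1 0
        · simp only [Set.mem_singleton_iff] at h
          subst h
          simpa using hmemS 1 0 0
      | one => simpa using hmemS 0 0 0
      | mul u v _ _ hu hv =>
        have : M * M ≤ M := by
          rw [hM, Submodule.span_mul_span]
          refine Submodule.span_le.mpr ?_
          rintro _ ⟨s, hs, t, ht, rfl⟩
          obtain ⟨a, e, c, rfl⟩ := hs
          obtain ⟨a', e', c', rfl⟩ := ht
          exact key a e c a' e' c'
        exact this (Submodule.mul_mem_mul hu hv)
    intro r
    have : r ∈ Submodule.span F ((Submonoid.closure ({x, y} : Set R) : Set R)) := by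
      rw [← Algebra.adjoin_eq_span, hgen]
      exact trivial
    exact Submodule.span_le.mpr hclosure this
  -- a helper for linear predicates
  have lin : ∀ u v : R, (∀ a e c : ℕ, u * (y ^ a * x ^ e * y ^ c) * v = 0) →
      ∀ r : R, u * r * v = 0 := by
    intro u v hmono r
    induction htop r using Submodule.span_induction with
    | mem s hs => obtain ⟨a, e, c, rfl⟩ := hs; exact hmono a e c
    | zero => simp
    | add s t _ _ hs ht => rw [mul_add, add_mul, hs, ht, add_zero]
    | smul f s _ hs => rw [mul_smul_comm, smul_mul_assoc, hs, smul_zero]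
  have sx : ∀ (n : ℕ) (z : R), x * (x ^ n * z) = x ^ n * (x * z) := fun n z => by
    rw [← mul_assoc, ← pow_succ', pow_succ, mul_assoc]
  have sx' : ∀ n : ℕ, x * x ^ n = x ^ n * x := fun n => by rw [← pow_succ', pow_succ]
  have sy : ∀ (n : ℕ) (z : R), y * (y ^ n * z) = y ^ n * (y * z) := fun n z => by
    rw [← mul_assoc, ← pow_succ', pow_succ, mul_assoc]
  have sy' : ∀ n : ℕ, y * y ^ n = y ^ n * y := fun n => by rw [← pow_succ', pow_succ]
  -- Step 1: (x*y) * r * (y*x) = 0 for all r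
  have step1 : x * y = 0 ∨ y * x = 0 := by
    refine hprime (x * y) (y * x) (lin _ _ ?_)
    intro a e c
    obtain _ | e1 := e
    · have : (x * y) * (y ^ a * x ^ 0 * y ^ c) * (y * x)
          = x * y ^ (a + c + 2) * x := by
        rw [pow_add, pow_add]
        simp [pow_succ, pow_add, mul_assoc, pow_two, sx, sx', sy, sy']
      rw [this]; exact hrel _ (by omega)
    · have h0 : x * y ^ (a + 1) * x = 0 := hrel _ (by omega)
      have : (x * y) * (y ^ a * x ^ (e1 + 1) * y ^ c) * (y * x)
          = (x * y ^ (a + 1) * x) * (x ^ e1 * y ^ c * (y * x)) := by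
        rw [pow_succ' x e1, pow_succ y a]
        simp [mul_assoc, sx, sx', sy, sy']
      rw [this, h0, zero_mul]
  -- Step 2: in either case, x = 0 or y = 0
  have step2 : x = 0 ∨ y = 0 := by
    rcases step1 with hxy | hyx
    · refine hprime x y (lin _ _ ?_)
      intro a e c
      obtain _ | e1 := e
      · have : x * (y ^ a * x ^ 0 * y ^ c) * y = (x * y) * (y ^ (a + c)) := by
          rw [pow_add]
          simp [mul_assoc, sx, sx', sy, sy']
        rw [this, hxy, zero_mul]
      obtain _ | a1 := a
      · have : x * (y ^ 0 * x ^ (e1 + 1) * y ^ c) * y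
            = x ^ (e1 + 1) * (x * y) * y ^ c := by
          rw [pow_succ' x e1]
          simp [pow_succ, mul_assoc, sx, sx', sy, sy']
        rw [this, hxy, mul_zero, zero_mul]
      · have h0 : x * y ^ (a1 + 1) * x = 0 := hrel _ (by omega)
        have : x * (y ^ (a1 + 1) * x ^ (e1 + 1) * y ^ c) * y
            = (x * y ^ (a1 + 1) * x) * (x ^ e1 * y ^ c * y) := by
          rw [pow_succ' x e1]
          simp [mul_assoc, sx, sx', sy, sy']
        rw [this, h0, zero_mul]
    · refine (hprime y x (lin _ _ ?_)).symm
      intro a e c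
      obtain _ | e1 := e
      · have : y * (y ^ a * x ^ 0 * y ^ c) * x = y ^ (a + c) * (y * x) := by
          rw [pow_add]
          simp [mul_assoc, sx, sx', sy, sy']
        rw [this, hyx, mul_zero]
      obtain _ | c1 := c
      · have : y * (y ^ a * x ^ (e1 + 1) * y ^ 0) * x
            = y ^ a * (y * x) * x ^ (e1 + 1) := by
          rw [pow_succ x e1]
          simp [pow_succ, mul_assoc, sx, sx', sy, sy']
        rw [this, hyx, mul_zero, zero_mul]
      · have h0 : x * y ^ (c1 + 1) * x = 0 := hrel _ (by omega)
        have : y * (y ^ a * x ^ (e1 + 1) * y ^ (c1 + 1)) * x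
            = y ^ (a + 1) * x ^ e1 * (x * y ^ (c1 + 1) * x) := by
          rw [pow_succ x e1, pow_succ y a]
          simp [mul_assoc, sx, sx', sy, sy']
        rw [this, h0, mul_zero]
  -- conclude
  rcases step2 with hx0 | hy0
  · refine finish y ?_
    rw [eq_top_iff, ← hgen]
    refine Algebra.adjoin_le ?_
    rintro z (rfl | rfl)
    · rw [hx0]; exact Subalgebra.zero_mem _
    · exact Algebra.subset_adjoin rfl
  · refine finish x ?_
    rw [eq_top_iff, ← hgen]
    refine Algebra.adjoin_le ?_
    rintro z (rfl | rfl)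
    · exact Algebra.subset_adjoin rfl
    · rw [hy0]; exact Subalgebra.zero_mem _
end

section
/- Let R be a ring and x, y ∈ R satisfy x·y^i·x = 0 for all integers i ≥ 1. Then for every element w of the unital subring generated by x and y, one has (x·y)·w·(x·y) = 0. -/
/-!
Let `A` be the additive subgroup spanned by the elements `x * y ^ k`, `k ≥ 1`. The hypothesis says
`A * x = 0`, and clearly `A * y ⊆ A`; hence the elements `w` with `A * w ⊆ A` form a subring
containing `x` and `y`, so `A * w ⊆ A` for every `w` in the subring generated by `x` and `y`.
Since `x * y ∈ A`, this gives `x * y * w ∈ A`, which is killed by right multiplication with `x`.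
-/

namespace AddSubgroup

variable {R : Type*} [Ring R]

def rightStabilizer (A : AddSubgroup R) : Subring R where
  carrier := {w | ∀ a ∈ A, a * w ∈ A}
  mul_mem' hv hw a ha := mul_assoc a _ _ ▸ hw _ (hv a ha)
  one_mem' a ha := (mul_one a).symm ▸ ha
  add_mem' hv hw a ha := (mul_add a _ _).symm ▸ add_mem (hv a ha) (hw a ha)
  zero_mem' a _ := (mul_zero a).symm ▸ A.zero_mem
  neg_mem' hw a ha := (mul_neg a _).symm ▸ neg_mem (hw a ha)

theorem mem_rightStabilizer_closure {S : Set R} {b : R} (h : ∀ s ∈ S, s * b ∈ closure S) :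
    b ∈ (closure S).rightStabilizer :=
  fun _ ha => (closure_le (comap (AddMonoidHom.mulRight b) (closure S))).2 h ha

theorem mul_eq_zero_of_mem_closure {S : Set R} {b a : R} (h : ∀ s ∈ S, s * b = 0)
    (ha : a ∈ closure S) : a * b = 0 :=
  (closure_le (AddMonoidHom.mulRight b).ker).2 h ha

end AddSubgroup

/-- Let `R` be a unital ring and `x, y ∈ R` with `x·yⁱ·x = 0` for all `i ≥ 1`. Then
`(x·y)·w·(x·y) = 0` for every `w` in the unital subring generated by `x` and `y`. -/
theorem stmt_5 (R : Type*) [Ring R] (x y : R)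
    (hrel : ∀ i : ℕ, 1 ≤ i → x * y ^ i * x = 0)
    (w : R) (hw : w ∈ Subring.closure ({x, y} : Set R)) :
    (x * y) * w * (x * y) = 0 := by
  set A := AddSubgroup.closure (Set.range fun k : ℕ => x * y ^ (k + 1))
  have hAx : ∀ a ∈ A, a * x = 0 := fun a =>
    AddSubgroup.mul_eq_zero_of_mem_closure (by rintro _ ⟨k, rfl⟩; exact hrel (k + 1) k.succ_pos)
  have hx : x ∈ A.rightStabilizer := fun a ha => (hAx a ha).symm ▸ A.zero_mem
  have hy : y ∈ A.rightStabilizer := AddSubgroup.mem_rightStabilizer_closure <| by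
    rintro _ ⟨k, rfl⟩
    exact AddSubgroup.subset_closure ⟨k + 1, by rw [mul_assoc, ← pow_succ]⟩
  have hxy : x * y ∈ A := AddSubgroup.subset_closure ⟨0, by simp⟩
  have hxyw : x * y * w ∈ A :=
    (Subring.closure_le.2 (Set.pair_subset hx hy) hw) _ hxy
  rw [← mul_assoc, hAx _ hxyw, zero_mul]
end

section
/- With the construction below, every simple left B-module is finite-dimensional over F. -/
open Matrix

/-- `B = F⟨e, σ⟩`, the unital `F`-subalgebra of `A` generated by `e` and `σ`. -/
abbrev ConstrB (F : Type*) [Field F] (a : ℕ → ℕ) (lam : Idx a → F) :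
    Subalgebra F (ConstrA F a) :=
  Algebra.adjoin F {elemE a lam, elemS F a}

universe u

/-!
Let `N` be a simple `B`-module. If some `e σ^(j+1) e` acts nontrivially on `N`, say on `v`, then
`N = B (e σ^(j+1) e) v`. Since `E₁₁ P_n^(j+1) E₁₁ = 0` for `n > j + 1`, the left ideal
`B (e σ^(j+1) e)` lives in the finitely many components with `n ≤ j + 1`, so it is
finite-dimensional, and so is its image `N`.

Otherwise `e σ^(j+1) e` kills `N` for every `j`. The sum of the images of the `σ^(j+1) e` is then
stable under `σ` and killed by `e`, and this forces `e` or `σ` to act by zero. So `N` is a simple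
`F[X]`-module through the remaining generator, i.e. `N ≅ F[X]/(p)` with `p ≠ 0`.
-/

open Polynomial Module

section

variable {F : Type*} [Field F] {N : Type*} [AddCommGroup N] [Module F N]

theorem Polynomial.finiteDimensional_of_isSimpleModule (M : Type*) [AddCommGroup M] [Module F M]
    [Module F[X] M] [IsScalarTower F F[X] M] [IsSimpleModule F[X] M] : FiniteDimensional F M := by
  obtain ⟨I, hI, ⟨e⟩⟩ := isSimpleModule_iff_quot_maximal.mp ‹_›
  obtain ⟨p, rfl⟩ := Submodule.IsPrincipal.principal I
  have hp : p ≠ 0 := by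
    rintro rfl
    exact (Ideal.bot_lt_of_maximal _ (Polynomial.not_isField F)).ne' Ideal.span_zero
  have : FiniteDimensional F (F[X] ⧸ Ideal.span {p}) := (AdjoinRoot.powerBasis hp).finite
  exact Module.Finite.equiv (e.restrictScalars F).symm

theorem Module.End.finiteDimensional_of_invtSubmodule_eq_bot_or_top [Nontrivial N]
    (T : Module.End F N) (h : ∀ W ∈ T.invtSubmodule, W = ⊥ ∨ W = ⊤) :
    FiniteDimensional F N := by
  have hT : Algebra.lsmul F F N T = T := by simp [Algebra.lsmul_eq_smul_one]
  have : IsSimpleOrder (Algebra.lsmul F F N T).invtSubmodule := by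
    rw [hT]
    refine { exists_pair_ne := ⟨⊥, ⊤, fun h => bot_ne_top congr(($h).1)⟩,
             eq_bot_or_eq_top := fun ⟨W, hW⟩ => ?_ }
    rw [invtSubmodule.mk_eq_bot_iff, invtSubmodule.mk_eq_top_iff]
    exact h W hW
  have : IsSimpleModule F[X] (AEval' T) :=
    isSimpleModule_iff _ _ |>.mpr <| (AEval.mapSubmodule F N T).isSimpleOrder_iff.mp this
  have := Polynomial.finiteDimensional_of_isSimpleModule (F := F) (AEval' T)
  exact Module.Finite.equiv (AEval'.of T).symm

theorem Module.End.eq_zero_or_eq_zero_of_mul_pow_mul_eq_zero (X S : Module.End F N)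
    (hrel : ∀ j, X * S ^ (j + 1) * X = 0)
    (h : ∀ W ∈ X.invtSubmodule, W ∈ S.invtSubmodule → W = ⊥ ∨ W = ⊤) : X = 0 ∨ S = 0 := by
  set M := ⨆ j, LinearMap.range (S ^ (j + 1) * X)
  have hMX : M ≤ LinearMap.ker X := iSup_le fun j => by
    rintro _ ⟨v, rfl⟩
    simpa [← Module.End.mul_apply, ← mul_assoc] using congr($(hrel j) v)
  have hMX' : M ∈ X.invtSubmodule := (mem_invtSubmodule_iff_forall_mem_of_mem _).mpr fun v hv => by
    rw [LinearMap.mem_ker.mp (hMX hv)]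
    exact M.zero_mem
  have hMS : M ∈ S.invtSubmodule := by
    rw [mem_invtSubmodule]
    refine iSup_le fun j => ?_
    rintro _ ⟨v, rfl⟩
    exact Submodule.mem_iSup_of_mem (j + 1) ⟨v, by simp [pow_succ', mul_assoc]⟩
  rcases h M hMX' hMS with hM | hM
  · have hSX : S * X = 0 := by
      rw [← LinearMap.range_eq_bot, eq_bot_iff, ← hM, ← pow_one S]
      exact le_iSup (fun j => LinearMap.range (S ^ (j + 1) * X)) 0
    have hXX : LinearMap.range X ∈ X.invtSubmodule :=
      (mem_invtSubmodule _).mpr fun v _ => LinearMap.mem_range_self X v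
    have hXS : LinearMap.range X ∈ S.invtSubmodule := by
      rw [mem_invtSubmodule]
      rintro _ ⟨v, rfl⟩
      simp [← Module.End.mul_apply, hSX]
    rcases h _ hXX hXS with hX | hX
    · exact .inl (LinearMap.range_eq_bot.mp hX)
    · right
      ext v
      obtain ⟨w, rfl⟩ := LinearMap.range_eq_top.mp hX v
      simp [← Module.End.mul_apply, hSX]
  · exact .inl (LinearMap.ker_eq_top.mp (top_le_iff.mp (hM ▸ hMX)))

theorem Module.End.finiteDimensional_of_mul_pow_mul_eq_zero [Nontrivial N] (X S : Module.End F N)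
    (hrel : ∀ j, X * S ^ (j + 1) * X = 0)
    (h : ∀ W ∈ X.invtSubmodule, W ∈ S.invtSubmodule → W = ⊥ ∨ W = ⊤) : FiniteDimensional F N := by
  rcases X.eq_zero_or_eq_zero_of_mul_pow_mul_eq_zero S hrel h with rfl | rfl
  · exact S.finiteDimensional_of_invtSubmodule_eq_bot_or_top fun W hW =>
      h W (invtSubmodule.zero (R := F) (M := N) ▸ trivial) hW
  · exact X.finiteDimensional_of_invtSubmodule_eq_bot_or_top fun W hW =>
      h W hW (invtSubmodule.zero (R := F) (M := N) ▸ trivial)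

theorem IsSimpleModule.eq_bot_or_eq_top_of_adjoin_eq_top {R : Type*} [Ring R] [Algebra F R]
    [Module R N] [IsScalarTower F R N] [IsSimpleModule R N] {s : Set R}
    (hs : Algebra.adjoin F s = ⊤) (W : Submodule F N) (hW : ∀ x ∈ s, ∀ w ∈ W, x • w ∈ W) :
    W = ⊥ ∨ W = ⊤ := by
  have hR (r : R) : ∀ w ∈ W, r • w ∈ W := by
    induction (hs ▸ Algebra.mem_top : r ∈ Algebra.adjoin F s) using Algebra.adjoin_induction with
    | mem x hx => exact hW x hx
    | algebraMap c => exact fun w hw => by simpa [algebraMap_smul] using W.smul_mem c hw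
    | add x y _ _ hx hy => exact fun w hw => by rw [add_smul]; exact W.add_mem (hx w hw) (hy w hw)
    | mul x y _ _ hx hy => exact fun w hw => by rw [mul_smul]; exact hx _ (hy w hw)
  obtain ⟨W', rfl⟩ : ∃ W' : Submodule R N, W'.restrictScalars F = W :=
    ⟨{ W with smul_mem' := fun r w hw => hR r w hw }, rfl⟩
  simpa using IsSimpleOrder.eq_bot_or_eq_top W'

theorem IsSimpleModule.finiteDimensional_of_smul_ne_zero {R : Type*} [Ring R] [Algebra F R]
    [Module R N] [IsScalarTower F R N] [IsSimpleModule R N] {z : R} {v : N} (hzv : z • v ≠ 0)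
    (U : Submodule F R) [FiniteDimensional F U] (hU : ∀ r : R, r * z ∈ U) :
    FiniteDimensional F N := by
  refine Module.Finite.of_surjective
    (((LinearMap.toSpanSingleton R N v).restrictScalars F).domRestrict U) fun y => ?_
  obtain ⟨r, rfl⟩ := IsSimpleModule.toSpanSingleton_surjective R hzv y
  exact ⟨⟨r * z, hU r⟩, by simp [mul_smul]⟩

theorem Submodule.finiteDimensional_pi_bot {ι : Type*} {M : ι → Type*} [∀ i, AddCommGroup (M i)]
    [∀ i, Module F (M i)] [∀ i, FiniteDimensional F (M i)] {s : Set ι} (hs : sᶜ.Finite) :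
    FiniteDimensional F (Submodule.pi s fun i => (⊥ : Submodule F (M i))) := by
  have := hs.to_subtype
  refine Module.Finite.of_injective
    ((LinearMap.pi fun i : ↥sᶜ => LinearMap.proj (R := F) (φ := M) i.1) ∘ₗ Submodule.subtype _)
    fun x y hxy => Subtype.ext <| funext fun i => ?_
  by_cases hi : i ∈ s
  · simpa using (x.2 i hi).trans (y.2 i hi).symm
  · exact congr_fun hxy ⟨i, hi⟩

theorem Subalgebra.finiteDimensional_comap_val {A : Type*} [Ring A] [Algebra F A]
    (S : Subalgebra F A) (V : Submodule F A) [FiniteDimensional F V] :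
    FiniteDimensional F (V.comap S.val.toLinearMap) :=
  Module.Finite.of_injective (S.val.toLinearMap.restrict fun _ h => h)
    fun _ _ hxy => Subtype.ext (Subtype.ext congr(($hxy).1))

theorem cycMat_pow_apply {n : ℕ} (j : ℕ) (k l : Fin n) :
    (cycMat F n ^ j) k l = if (l : ℕ) = ((k : ℕ) + j) % n then 1 else 0 := by
  induction j generalizing l with
  | zero => simp [Matrix.one_apply, Fin.ext_iff, Nat.mod_eq_of_lt k.isLt, eq_comm]
  | succ j ih =>
    rw [pow_succ, Matrix.mul_apply, Finset.sum_eq_single ⟨(k + j) % n, Nat.mod_lt _ k.pos⟩]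
    · rw [ih, if_pos rfl, one_mul]
      simp only [cycMat, of_apply, Nat.mod_add_mod, add_assoc]
    · intro m _ hm
      rw [ih, if_neg fun h => hm (Fin.ext h), zero_mul]
    · simp

theorem e11_mul_cycMat_pow_mul_e11 {n j : ℕ} (hj : 0 < j) (hjn : j < n) :
    e11 F n * cycMat F n ^ j * e11 F n = 0 := by
  have he : e11 F n = Matrix.single ⟨0, by omega⟩ ⟨0, by omega⟩ 1 := by
    ext k l
    simp [e11, Matrix.single_apply, Fin.ext_iff, eq_comm]
  rw [he, Matrix.single_mul_mul_single, cycMat_pow_apply]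
  simp [Nat.mod_eq_of_lt hjn, hj.ne]

theorem Idx.finite_setOf_fst_le_s7 (a : ℕ → ℕ) (m : ℕ) : {p : Idx a | p.1.1 ≤ m}.Finite := by
  refine ((Set.finite_Iic (m, (Finset.range (m + 1)).sup a)).preimage
    Subtype.val_injective.injOn).subset fun p hp => ⟨hp, ?_⟩
  exact p.2.2.le.trans (Finset.le_sup (Finset.mem_range.mpr (Nat.lt_succ_of_le hp)))

theorem elemE_mul_elemS_pow_mul_elemE_apply (a : ℕ → ℕ) (lam : Idx a → F) {j : ℕ} (hj : 0 < j)
    (p : Idx a) (hp : j < p.1.1) : (elemE a lam * elemS F a ^ j * elemE a lam) p = 0 := by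
  simp only [Pi.mul_apply, Pi.pow_apply, elemE, elemS, smul_mul_assoc, mul_smul_comm,
    e11_mul_cycMat_pow_mul_e11 hj hp, smul_zero]

end

theorem stmt_7_general (F : Type*) [Field F] (a : ℕ → ℕ) (lam : Idx a → F)
    (N : Type u) [AddCommGroup N] [Module F N] [Module (↥(ConstrB F a lam)) N]
    [IsScalarTower F (↥(ConstrB F a lam)) N]
    (hsimple : IsSimpleModule (↥(ConstrB F a lam)) N) :
    FiniteDimensional F N := by
  let e : ConstrB F a lam := ⟨elemE a lam, Algebra.subset_adjoin (by simp)⟩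
  let σ : ConstrB F a lam := ⟨elemS F a, Algebra.subset_adjoin (by simp)⟩
  by_cases h : ∃ (j : ℕ) (v : N), (e * σ ^ (j + 1) * e) • v ≠ 0
  · obtain ⟨j, v, hv⟩ := h
    let V : Submodule F (ConstrA F a) := Submodule.pi {p | j + 1 < p.1.1} fun _ => ⊥
    have : FiniteDimensional F V := Submodule.finiteDimensional_pi_bot
      (by simpa [Set.compl_ofPred] using Idx.finite_setOf_fst_le_s7 a (j + 1))
    have := (ConstrB F a lam).finiteDimensional_comap_val V
    refine IsSimpleModule.finiteDimensional_of_smul_ne_zero hv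
      (V.comap (ConstrB F a lam).val.toLinearMap) fun r => ?_
    rw [Submodule.mem_comap, Submodule.mem_pi]
    intro p hp
    exact (Submodule.mem_bot F).mpr <|
      mul_eq_zero_of_right _ (elemE_mul_elemS_pow_mul_elemE_apply a lam j.succ_pos p hp)
  · push Not at h
    have := IsSimpleModule.nontrivial (ConstrB F a lam) N
    refine Module.End.finiteDimensional_of_mul_pow_mul_eq_zero (Algebra.lsmul F F N e)
      (Algebra.lsmul F F N σ) (fun j => ?_) fun W he hσ => ?_
    · ext v
      rw [← map_pow, ← map_mul, ← map_mul, Algebra.lsmul_apply, LinearMap.zero_apply]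
      exact h j v
    · refine IsSimpleModule.eq_bot_or_eq_top_of_adjoin_eq_top
        (s := Subtype.val ⁻¹' {elemE a lam, elemS F a}) Algebra.adjoin_adjoin_coe_preimage W ?_
      rintro x (hx | hx)
      · obtain rfl : x = e := Subtype.ext hx
        exact he
      · obtain rfl : x = σ := Subtype.ext hx
        exact hσ

set_option maxHeartbeats 1000000 in
set_option synthInstance.maxHeartbeats 200000 in
/-- Every simple left module over the algebra `B = F⟨e,σ⟩` is finite-dimensional over `F`. -/
theorem stmt_7 (F : Type*) [Field F] [IsAlgClosed F] (a : ℕ → ℕ) (lam : Idx a → F)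
    (hlam_ne : ∀ p, lam p ≠ 0)
    (hlam : ∀ p q : Idx a, p.1.1 = q.1.1 → p ≠ q → lam p ≠ lam q ∧ lam p ≠ -lam q)
    (N : Type u) [AddCommGroup N] [Module F N] [Module (↥(ConstrB F a lam)) N]
    [IsScalarTower F (↥(ConstrB F a lam)) N]
    (hsimple : IsSimpleModule (↥(ConstrB F a lam)) N) :
    FiniteDimensional F N :=
  stmt_7_general F a lam N hsimple
end

section
/- With the construction below, for each n ∈ S and 1 ≤ i ≤ a_n let M_{n,i} denote the B-module F^n with B acting through θ_{n,i}. Then for (n,i) ≠ (m,j), the B-modules M_{n,i} and M_{m,j} are not isomorphic. -/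
open Matrix

set_option maxHeartbeats 1000000
set_option synthInstance.maxHeartbeats 400000

/-- The `B`-module structure `M_{n,i}` on `Fⁿ` (for the component `p = (n,i)`) in which `B`
acts through the projection `θ_{n,i} : A → M_n(F)`, i.e. `b • v = θ_{n,i}(b) ⬝ v`. -/
noncomputable def reprMod (F : Type*) [Field F] (a : ℕ → ℕ) (lam : Idx a → F) (p : Idx a) :
    Module ↥(ConstrB F a lam) (Fin p.1.1 → F) :=
  Module.compHom (Fin p.1.1 → F)
    ((Matrix.toLinAlgEquiv' :
        Matrix (Fin p.1.1) (Fin p.1.1) F ≃ₐ[F] Module.End F (Fin p.1.1 → F)).toAlgHom.toRingHom.comp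
      (((Pi.evalAlgHom F (fun q : Idx a => Matrix (Fin q.1.1) (Fin q.1.1) F) p).comp
        (ConstrB F a lam).val).toRingHom))

/-!
A `B`-linear isomorphism `M_{n,i} ≃ M_{m,j}` is `F`-linear, because the scalars of `F` lie in `B`
and act as scalars on both modules. Hence `n = m`, and it conjugates the action of `e` on
`M_{n,i}` into that on `M_{m,j}`. These actions are `λ_{n,i} E₁₁` and `λ_{m,j} E₁₁`, so comparing
traces gives `λ_{n,i} = λ_{m,j}`, which for `n = m` and `(n,i) ≠ (m,j)` is excluded.
-/

theorem exists_linearEquiv_conj_eq_of_compHom {R A M N : Type*} [CommSemiring R] [Semiring A]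
    [Algebra R A] [AddCommMonoid M] [Module R M] [AddCommMonoid N] [Module R N]
    (φ : A →ₐ[R] Module.End R M) (ψ : A →ₐ[R] Module.End R N)
    (f : letI := Module.compHom M φ.toRingHom
      letI := Module.compHom N ψ.toRingHom
      M ≃ₗ[A] N) :
    ∃ g : M ≃ₗ[R] N, ∀ x, g.conj (φ x) = ψ x := by
  let := Module.compHom M φ.toRingHom
  let := Module.compHom N ψ.toRingHom
  refine ⟨{ f with map_smul' := fun c v => ?_ }, fun x => LinearMap.ext fun v => ?_⟩
  · have hφ : φ (algebraMap R A c) v = c • v := by simp [φ.commutes]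
    have hψ : ψ (algebraMap R A c) (f v) = c • f v := by simp [ψ.commutes]
    calc f (c • v) = f (φ (algebraMap R A c) v) := by rw [hφ]
      _ = ψ (algebraMap R A c) (f v) := f.map_smul _ v
      _ = c • f v := hψ
  · exact (f.map_smul x (f.symm v)).trans (congrArg (ψ x) (f.apply_symm_apply v))

theorem trace_e11 (F : Type*) [Semiring F] (n : ℕ) [NeZero n] : (e11 F n).trace = 1 := by
  simp [Matrix.trace, e11, Fin.val_eq_zero_iff]

theorem trace_elemE {F : Type*} [Field F] (a : ℕ → ℕ) (lam : Idx a → F) (p : Idx a) :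
    (elemE a lam p).trace = lam p := by
  have : NeZero p.1.1 := ⟨by have := p.2.1; omega⟩
  simp [elemE, trace_e11]

noncomputable def reprAlgHom (F : Type*) [Field F] (a : ℕ → ℕ) (lam : Idx a → F) (p : Idx a) :
    ConstrB F a lam →ₐ[F] Module.End F (Fin p.1.1 → F) :=
  Matrix.toLinAlgEquiv'.toAlgHom.comp ((Pi.evalAlgHom F _ p).comp (ConstrB F a lam).val)

theorem trace_reprAlgHom (F : Type*) [Field F] (a : ℕ → ℕ) (lam : Idx a → F) (p : Idx a)
    (b : ConstrB F a lam) : LinearMap.trace F _ (reprAlgHom F a lam p b) = (b.val p).trace :=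
  Matrix.trace_toLin'_eq _

theorem stmt_13_general (F : Type*) [Field F] (a : ℕ → ℕ) (lam : Idx a → F)
    (hlam : ∀ p q : Idx a, p.1.1 = q.1.1 → p ≠ q → lam p ≠ lam q ∧ lam p ≠ -lam q)
    (p q : Idx a) (hpq : p ≠ q) :
    letI := reprMod F a lam p
    letI := reprMod F a lam q
    IsEmpty ((Fin p.1.1 → F) ≃ₗ[↥(ConstrB F a lam)] (Fin q.1.1 → F)) := by
  refine ⟨fun f => ?_⟩
  -- `reprMod F a lam p` is by definition `Module.compHom _ (reprAlgHom F a lam p).toRingHom`.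
  obtain ⟨g, hg⟩ :=
    exists_linearEquiv_conj_eq_of_compHom (reprAlgHom F a lam p) (reprAlgHom F a lam q) f
  have hdim : p.1.1 = q.1.1 := by simpa using g.finrank_eq
  let e : ConstrB F a lam := ⟨elemE a lam, Algebra.subset_adjoin (by simp)⟩
  refine (hlam p q hdim hpq).1 ?_
  rw [← trace_elemE a lam p, ← trace_elemE a lam q, ← trace_reprAlgHom F a lam p e,
    ← trace_reprAlgHom F a lam q e, ← hg, LinearMap.trace_conj']

/-- For distinct components `(n,i) ≠ (m,j)`, the `B`-modules `M_{n,i}` and `M_{m,j}`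
are not isomorphic. -/
theorem stmt_13 (F : Type*) [Field F] [IsAlgClosed F] (a : ℕ → ℕ) (lam : Idx a → F)
    (hlam_ne : ∀ p, lam p ≠ 0)
    (hlam : ∀ p q : Idx a, p.1.1 = q.1.1 → p ≠ q → lam p ≠ lam q ∧ lam p ≠ -lam q)
    (p q : Idx a) (hpq : p ≠ q) :
    letI := reprMod F a lam p
    letI := reprMod F a lam q
    IsEmpty ((Fin p.1.1 → F) ≃ₗ[↥(ConstrB F a lam)] (Fin q.1.1 → F)) :=
  stmt_13_general F a lam hlam p q hpq
end
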